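/- Let A and B be uniform algebras on compact Hausdorff spaces X and Y, let T : S(A) → S(B) be a surjective isometry, and let φ : Ch(A) → Ch(B) be a bijection and τ : Ch(A) × 𝕋 → 𝕋 a map with T(F_{x,λ}) = F_{φ(x), τ(x,λ)} for all x ∈ Ch(A), λ ∈ 𝕋. Define Ch(A)₊ = {x ∈ Ch(A) : τ(x,i)/τ(x,1) = i} and Ch(A)₋ = {x ∈ Ch(A) : τ(x,i)/τ(x,1) = −i}. Then for every f ∈ S(A): T(f)(φ(x)) = τ(x,1)·f(x) if x ∈ Ch(A)₊, and T(f)(φ(x)) = τ(x,1)·conj(f(x)) if x ∈ Ch(A)₋. -/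

import Mathlib

open scoped ComplexConjugate

/-- A peaking function for the set `K` in a (sub)algebra `A` of `C(X, ℂ)`:
`f ∈ A`, `‖f‖ = 1`, `K = f⁻¹(1)` and `{x : |f(x)| = 1} = f⁻¹(1) = K`. -/
def IsPeakingFunction {X : Type*} [TopologicalSpace X] [CompactSpace X]
    (A : Subalgebra ℂ C(X, ℂ)) (f : C(X, ℂ)) (K : Set X) : Prop :=
  f ∈ A ∧ ‖f‖ = 1 ∧ K = {x | f x = 1} ∧ {x | ‖f x‖ = 1} = K

/-- A peak set for `A`. -/
def IsPeakSet {X : Type*} [TopologicalSpace X] [CompactSpace X]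
    (A : Subalgebra ℂ C(X, ℂ)) (K : Set X) : Prop :=
  ∃ f, IsPeakingFunction A f K

/-- A weak peak set for `A`: an intersection of a nonempty family of peak sets. -/
def IsWeakPeakSet {X : Type*} [TopologicalSpace X] [CompactSpace X]
    (A : Subalgebra ℂ C(X, ℂ)) (K : Set X) : Prop :=
  ∃ S : Set (Set X), S.Nonempty ∧ (∀ E ∈ S, IsPeakSet A E) ∧ K = ⋂₀ S

/-- The Choquet boundary of a uniform algebra: the set of weak peak points. -/
def choquetBdry {X : Type*} [TopologicalSpace X] [CompactSpace X]
    (A : Subalgebra ℂ C(X, ℂ)) : Set X :=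
  {x | IsWeakPeakSet A {x}}

/-- The unit sphere `S(A)` of `A`, as a subset of `C(X, ℂ)`. -/
def uaSphere {X : Type*} [TopologicalSpace X] [CompactSpace X]
    (A : Subalgebra ℂ C(X, ℂ)) : Set C(X, ℂ) :=
  {f | f ∈ A ∧ ‖f‖ = 1}

/-- The set `F_{x,λ} = {f ∈ S(A) : f x = λ}`. -/
def uaSlice {X : Type*} [TopologicalSpace X] [CompactSpace X]
    (A : Subalgebra ℂ C(X, ℂ)) (x : X) (lam : ℂ) : Set C(X, ℂ) :=
  {f | f ∈ uaSphere A ∧ f x = lam}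

/-!
Fix `x ∈ Ch(A)`, `f ∈ S(A)`, put `μ = f(x)` and `ν = T(f)(φ(x))`. A Bishop-type bump at `x`
(a function of `A` peaking at `x`, close to `[0, 1]` everywhere and small away from `x`)
approximates, for every `λ ∈ 𝕋`, an element of `F_{x,λ}` at distance at most
`max(1, |μ - λ|) + ε` from `f`. Transporting this through `T` in both directions gives
`|ν - τ(x,λ)| ≤ max(1, |μ - λ|)` and `|μ - λ| ≤ max(1, |ν - τ(x,λ)|)`. Constant functions show
that `τ(x, ·)` is an isometry of `𝕋`, hence `τ(x,λ) = τ(x,1)·λ` on `Ch(A)₊` and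
`τ(x,λ) = τ(x,1)·conj λ` on `Ch(A)₋`. Finally, two points `z, w` of `ℂ` with
`|z - λ| ≤ max(1, |w - λ|)` and vice versa for all `λ ∈ 𝕋` coincide: testing with
`λ = -z/|z|` gives `|z| ≤ |w|`, and the equality case of the triangle inequality puts `w` on
the ray of `z`.
-/

lemma norm_sub_mul_ofReal_le_max (μ lam : ℂ) {s : ℝ} (hs : s ∈ Set.Icc (0 : ℝ) 1) :
    ‖μ - lam * s‖ ≤ max ‖μ‖ ‖μ - lam‖ := by
  refine convexOn_univ_norm.le_on_segment trivial trivial ⟨1 - s, s, by linarith [hs.2], hs.1,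
    by ring, ?_⟩
  simp only [Complex.real_smul]
  push_cast
  ring

lemma norm_exp_sub_exp_re_le (z : ℂ) :
    ‖Complex.exp z - Real.exp z.re‖ ≤ Real.exp z.re * |z.im| := by
  have h : Complex.exp z - Real.exp z.re =
      Real.exp z.re * (Complex.exp (Complex.I * z.im) - 1) := by
    rw [Complex.ofReal_exp, mul_sub, mul_one, ← Complex.exp_add]
    congr 2
    rw [mul_comm, Complex.re_add_im]
  rw [h, norm_mul, Complex.norm_real, Real.norm_of_nonneg (Real.exp_pos _).le]
  exact mul_le_mul_of_nonneg_left Real.norm_exp_I_mul_ofReal_sub_one_le (Real.exp_pos _).le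

lemma norm_add_one_le_of_forall_norm_sub_le_max {z w : ℂ} (hz : z ≠ 0)
    (H : ∀ lam : ℂ, ‖lam‖ = 1 → ‖z - lam‖ ≤ max 1 ‖w - lam‖) :
    ‖z‖ + 1 ≤ ‖w + ‖z‖⁻¹ • z‖ := by
  have hu : ‖‖z‖⁻¹ • z‖ = 1 := norm_smul_inv_norm hz
  have hzu : ‖z + ‖z‖⁻¹ • z‖ = ‖z‖ + 1 := by
    rw [← hu, ← sameRay_iff_norm_add]
    exact SameRay.sameRay_pos_smul_right z (inv_pos.2 (norm_pos_iff.2 hz))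
  have h := H (-(‖z‖⁻¹ • z)) (by rw [norm_neg, hu])
  rw [sub_neg_eq_add, sub_neg_eq_add, hzu] at h
  exact (le_max_iff.1 h).resolve_left (by linarith [norm_pos_iff.2 hz])

lemma eq_of_forall_norm_sub_le_max {z w : ℂ}
    (H₁ : ∀ lam : ℂ, ‖lam‖ = 1 → ‖z - lam‖ ≤ max 1 ‖w - lam‖)
    (H₂ : ∀ lam : ℂ, ‖lam‖ = 1 → ‖w - lam‖ ≤ max 1 ‖z - lam‖) : z = w := by
  have norm_le : ∀ {a b : ℂ}, (∀ lam : ℂ, ‖lam‖ = 1 → ‖a - lam‖ ≤ max 1 ‖b - lam‖) →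
      ‖a‖ ≤ ‖b‖ := fun {a b} H => by
    rcases eq_or_ne a 0 with rfl | ha
    · simp
    have := (norm_add_one_le_of_forall_norm_sub_le_max ha H).trans (norm_add_le _ _)
    rw [show ‖‖a‖⁻¹ • a‖ = 1 from norm_smul_inv_norm ha] at this
    linarith
  have hnorm : ‖z‖ = ‖w‖ := le_antisymm (norm_le H₁) (norm_le H₂)
  rcases eq_or_ne z 0 with rfl | hz
  · exact (norm_eq_zero.1 (hnorm.symm.trans norm_zero)).symm
  have hu : ‖‖z‖⁻¹ • z‖ = 1 := norm_smul_inv_norm hz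
  have hray : SameRay ℝ w (‖z‖⁻¹ • z) := by
    rw [sameRay_iff_norm_add, hu, ← hnorm]
    exact le_antisymm ((norm_add_le _ _).trans_eq (by rw [hu, hnorm]))
      (norm_add_one_le_of_forall_norm_sub_le_max hz H₁)
  calc z = ‖w‖ • ‖z‖⁻¹ • z := by rw [← hnorm, smul_inv_smul₀ (norm_ne_zero_iff.2 hz)]
    _ = w := by rw [hray.norm_smul_eq, hu, one_smul]

lemma norm_inv_mul_sub {ρ : ℂ} (hρ : ‖ρ‖ = 1) (a c : ℂ) : ‖ρ⁻¹ * a - c‖ = ‖a - ρ * c‖ := by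
  rw [← one_mul ‖ρ⁻¹ * a - c‖, ← hρ, ← norm_mul, mul_sub,
    mul_inv_cancel_left₀ (ne_zero_of_norm_ne_zero (hρ ▸ one_ne_zero))]

lemma Complex.eq_of_norm_sub_one_eq_of_norm_sub_I_eq {z w : ℂ} (hz : ‖z‖ = 1) (hw : ‖w‖ = 1)
    (h1 : ‖z - 1‖ = ‖w - 1‖) (hI : ‖z - I‖ = ‖w - I‖) : z = w := by
  have sq : ∀ u : ℂ, ‖u‖ = 1 → u.re * u.re + u.im * u.im = 1 := fun u hu => by
    rw [← Complex.normSq_apply, ← Complex.sq_norm, hu, one_pow]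
  have e1 := congrArg (· ^ 2) h1
  have eI := congrArg (· ^ 2) hI
  simp only [Complex.sq_norm, Complex.normSq_apply, sub_re, sub_im, one_re, one_im, I_re,
    I_im] at e1 eI
  apply Complex.ext <;> nlinarith [sq z hz, sq w hw]

lemma eq_mul_of_forall_norm_sub_mul_le_max {ν μ ρ : ℂ} (hρ : ‖ρ‖ = 1)
    (H₁ : ∀ lam : ℂ, ‖lam‖ = 1 → ‖ν - ρ * lam‖ ≤ max 1 ‖μ - lam‖)
    (H₂ : ∀ lam : ℂ, ‖lam‖ = 1 → ‖μ - lam‖ ≤ max 1 ‖ν - ρ * lam‖) : ν = ρ * μ := by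
  have h := eq_of_forall_norm_sub_le_max (z := ρ⁻¹ * ν) (w := μ)
    (fun lam hlam => norm_inv_mul_sub hρ ν lam ▸ H₁ lam hlam)
    (fun lam hlam => norm_inv_mul_sub hρ ν lam ▸ H₂ lam hlam)
  exact (inv_mul_eq_iff_eq_mul₀ (ne_zero_of_norm_ne_zero (hρ ▸ one_ne_zero))).1 h

lemma eq_mul_conj_of_forall_norm_sub_mul_conj_le_max {ν μ ρ : ℂ} (hρ : ‖ρ‖ = 1)
    (H₁ : ∀ lam : ℂ, ‖lam‖ = 1 → ‖ν - ρ * conj lam‖ ≤ max 1 ‖μ - lam‖)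
    (H₂ : ∀ lam : ℂ, ‖lam‖ = 1 → ‖μ - lam‖ ≤ max 1 ‖ν - ρ * conj lam‖) : ν = ρ * conj μ := by
  have hnorm : ∀ lam : ℂ, ‖μ - conj lam‖ = ‖conj μ - lam‖ := fun lam => by
    rw [← Complex.norm_conj, map_sub, Complex.conj_conj]
  refine eq_mul_of_forall_norm_sub_mul_le_max hρ (fun lam hlam => ?_) (fun lam hlam => ?_)
  · simpa [hnorm] using H₁ (conj lam) (by rwa [Complex.norm_conj])
  · simpa [hnorm] using H₂ (conj lam) (by rwa [Complex.norm_conj])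

section CircleIsometry

variable {t : ℂ → ℂ} (ht : ∀ lam : ℂ, ‖lam‖ = 1 → ‖t lam‖ = 1)
  (hdist : ∀ a b : ℂ, ‖a‖ = 1 → ‖b‖ = 1 → ‖t a - t b‖ = ‖a - b‖)
include ht hdist

lemma eq_mul_of_apply_I_eq_I_mul (hI : t Complex.I = Complex.I * t 1) {lam : ℂ}
    (hlam : ‖lam‖ = 1) : t lam = t 1 * lam := by
  have h1 := ht 1 norm_one
  have hζ : (t 1)⁻¹ * t lam = lam := by
    refine Complex.eq_of_norm_sub_one_eq_of_norm_sub_I_eq ?_ hlam ?_ ?_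
    · rw [norm_mul, norm_inv, h1, ht lam hlam, inv_one, one_mul]
    · rw [norm_inv_mul_sub h1, mul_one, hdist _ _ hlam norm_one]
    · rw [norm_inv_mul_sub h1, mul_comm, ← hI, hdist _ _ hlam Complex.norm_I]
  exact (inv_mul_eq_iff_eq_mul₀ (ne_zero_of_norm_ne_zero (h1 ▸ one_ne_zero))).1 hζ

lemma eq_mul_conj_of_apply_I_eq_neg_I_mul (hI : t Complex.I = -Complex.I * t 1) {lam : ℂ}
    (hlam : ‖lam‖ = 1) : t lam = t 1 * conj lam := by
  have h1 := ht 1 norm_one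
  have hζ : (t 1)⁻¹ * t lam = conj lam := by
    rw [← Complex.conj_conj ((t 1)⁻¹ * t lam)]
    refine congrArg conj (Complex.eq_of_norm_sub_one_eq_of_norm_sub_I_eq ?_ hlam ?_ ?_)
    · rw [Complex.norm_conj, norm_mul, norm_inv, h1, ht lam hlam, inv_one, one_mul]
    · rw [← Complex.norm_conj, map_sub, Complex.conj_conj, map_one, norm_inv_mul_sub h1,
        mul_one, hdist _ _ hlam norm_one]
    · rw [← Complex.norm_conj, map_sub, Complex.conj_conj, Complex.conj_I, sub_neg_eq_add,
        ← sub_neg_eq_add, norm_inv_mul_sub h1, mul_comm, ← hI,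
        hdist _ _ hlam Complex.norm_I]
  exact (inv_mul_eq_iff_eq_mul₀ (ne_zero_of_norm_ne_zero (h1 ▸ one_ne_zero))).1 hζ

end CircleIsometry

lemma IsCompact.exists_lt_forall_le_of_forall_lt {X : Type*} [TopologicalSpace X] {K : Set X}
    (hK : IsCompact K) {g : X → ℝ} (hg : ContinuousOn g K) {c : ℝ} (h : ∀ t ∈ K, g t < c) :
    ∃ r < c, ∀ t ∈ K, g t ≤ r := by
  rcases K.eq_empty_or_nonempty with rfl | hne
  · exact ⟨c - 1, by linarith, by simp⟩
  obtain ⟨t₀, ht₀, hmax⟩ := hK.exists_isMaxOn hne hg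
  exact ⟨g t₀, h t₀ ht₀, hmax⟩

section PeakFunctions

variable {X : Type*} [TopologicalSpace X] [CompactSpace X] {A : Subalgebra ℂ C(X, ℂ)}
  {f : C(X, ℂ)} {K : Set X}

lemma IsPeakingFunction.norm_apply_le_one (hf : IsPeakingFunction A f K) (t : X) :
    ‖f t‖ ≤ 1 :=
  hf.2.1 ▸ f.norm_coe_le_norm t

lemma IsPeakingFunction.apply_eq_one (hf : IsPeakingFunction A f K) {t : X} (ht : t ∈ K) :
    f t = 1 := by
  rwa [hf.2.2.1] at ht

lemma IsPeakingFunction.norm_apply_lt_one (hf : IsPeakingFunction A f K) {t : X} (ht : t ∉ K) :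
    ‖f t‖ < 1 :=
  (hf.norm_apply_le_one t).lt_of_ne fun h => ht (hf.2.2.2 ▸ h)

lemma IsPeakSet.isClosed (hK : IsPeakSet A K) : IsClosed K := by
  obtain ⟨f, hf⟩ := hK
  rw [hf.2.2.1]
  exact isClosed_eq f.continuous continuous_const

/-- Finitely many of the peak sets cutting out `{x}` already cut out a set inside `U`; the
product of their peaking functions peaks at `x` inside `U`. -/
lemma exists_mem_peak_in_nhds {x : X} (hx : x ∈ choquetBdry A) {U : Set X} (hU : IsOpen U)
    (hxU : x ∈ U) :
    ∃ w ∈ A, w x = 1 ∧ (∀ t, ‖w t‖ ≤ 1) ∧ ∃ r < 1, ∀ t ∉ U, ‖w t‖ ≤ r := by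
  obtain ⟨S, -, hS, hSx⟩ := hx
  choose F hF using fun E : S => hS E E.2
  have hcover : Uᶜ ∩ ⋂ E : S, (E : Set X) = ∅ := by
    rw [← Set.sInter_eq_iInter, ← hSx]
    ext t
    simp only [Set.mem_inter_iff, Set.mem_compl_iff, Set.mem_singleton_iff,
      Set.mem_empty_iff_false, iff_false, not_and]
    rintro htU rfl
    exact htU hxU
  obtain ⟨s, hs⟩ := hU.isClosed_compl.isCompact.elim_finite_subfamily_closed
    (fun E : S => (E : Set X)) (fun E => (hS E E.2).isClosed) hcover
  set w := ∏ E ∈ s, F E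
  have hw_le : ∀ t, ‖w t‖ ≤ 1 := fun t => by
    rw [ContinuousMap.prod_apply, norm_prod]
    exact Finset.prod_le_one (fun _ _ => norm_nonneg _) fun E _ => (hF E).norm_apply_le_one t
  have hw_lt : ∀ t ∈ Uᶜ, ‖w t‖ < 1 := fun t ht => by
    obtain ⟨E, hE, htE⟩ : ∃ E ∈ s, t ∉ (E : Set X) := by
      by_contra! h
      exact (Set.eq_empty_iff_forall_notMem.1 hs) t ⟨ht, Set.mem_iInter₂.2 h⟩
    rw [ContinuousMap.prod_apply, norm_prod, ← Finset.mul_prod_erase s _ hE]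
    exact mul_lt_one_of_nonneg_of_lt_one_left (norm_nonneg _) ((hF E).norm_apply_lt_one htE)
      (Finset.prod_le_one (fun _ _ => norm_nonneg _) fun E' _ => (hF E').norm_apply_le_one t)
  obtain ⟨r, hr, hwr⟩ := hU.isClosed_compl.isCompact.exists_lt_forall_le_of_forall_lt
    (map_continuous w).norm.continuousOn hw_lt
  refine ⟨w, Subalgebra.prod_mem A fun E _ => (hF E).1, ?_, hw_le, r, hr, hwr⟩
  rw [ContinuousMap.prod_apply]
  exact Finset.prod_eq_one fun E _ => (hF E).apply_eq_one ((hSx.symm ▸ rfl : x ∈ ⋂₀ S) E E.2)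

lemma exists_mem_apply_eq_log_one_sub (hA : IsClosed (A : Set C(X, ℂ))) {q : C(X, ℂ)}
    (hq : q ∈ A) (hq1 : ‖q‖ < 1) : ∃ l ∈ A, ∀ t, l t = Complex.log (1 - q t) := by
  set F : ℕ → C(X, ℂ) := fun n => (n : ℂ)⁻¹ • q ^ n
  have hF : ∀ n, ‖F n‖ ≤ ‖q‖ ^ n := by
    rintro (_ | n)
    · simp [F]
    refine (norm_smul_le _ _).trans ((mul_le_of_le_one_left (norm_nonneg _) ?_).trans
      (norm_pow_le' q n.succ_pos))
    rw [norm_inv, Complex.norm_natCast]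
    exact inv_le_one_of_one_le₀ (by simp)
  have hs : Summable F :=
    Summable.of_norm_bounded (summable_geometric_of_lt_one (norm_nonneg q) hq1) hF
  refine ⟨-∑' n, F n, A.neg_mem (tsum_mem hA fun n => A.smul_mem (A.pow_mem hq n) _),
    fun t => ?_⟩
  have hlog := Complex.hasSum_taylorSeries_neg_log ((q.norm_coe_le_norm t).trans_lt hq1)
  have heval := hs.hasSum.mapL (ContinuousMap.evalCLM ℂ t)
  simp only [ContinuousMap.evalCLM_apply, F, ContinuousMap.smul_apply, ContinuousMap.pow_apply,
    smul_eq_mul, inv_mul_eq_div] at heval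
  rw [ContinuousMap.neg_apply, heval.unique hlog, neg_neg]

lemma exists_mem_apply_eq_exp (hA : IsClosed (A : Set C(X, ℂ))) {a : C(X, ℂ)} (ha : a ∈ A) :
    ∃ E ∈ A, ∀ t, E t = Complex.exp (a t) :=
  ⟨NormedSpace.exp a, NormedSpace.exp_mem hA ha, fun t => by
    rw [Complex.exp_eq_exp_ℂ]
    exact NormedSpace.map_exp (ContinuousMap.evalAlgHom ℂ ℂ t) (continuous_eval_const t) a⟩

/-- The witness is `q = (1 - d)/2 • (1 + w)` for a `w` peaking at `x` inside `U`. -/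
lemma exists_mem_re_one_sub_ge {x : X} (hx : x ∈ choquetBdry A) {U : Set X} (hU : IsOpen U)
    (hxU : x ∈ U) : ∃ γ > 0, ∀ d : ℝ, 0 < d → d ≤ 1 → ∃ q ∈ A, ‖q‖ < 1 ∧ q x = 1 - d ∧
      ∀ t, d ≤ (1 - q t).re ∧ (t ∉ U → γ ≤ (1 - q t).re) := by
  obtain ⟨w, hwA, hwx, hw1, r, hr1, hwr⟩ := exists_mem_peak_in_nhds hx hU hxU
  refine ⟨(1 - r) / 2, by linarith, fun d hd hd1 => ?_⟩
  obtain ⟨q, hqA, hq_def⟩ : ∃ q ∈ A, ∀ t, q t = ((1 - d) / 2 : ℝ) * (1 + w t) :=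
    ⟨(((1 - d) / 2 : ℝ) : ℂ) • (1 + w), A.smul_mem (A.add_mem A.one_mem hwA) _, fun t => rfl⟩
  have hq : ∀ t, ‖q t‖ ≤ (1 - d) / 2 * (1 + ‖w t‖) := fun t => by
    rw [hq_def, norm_mul, Complex.norm_real, Real.norm_of_nonneg (by linarith)]
    exact mul_le_mul_of_nonneg_left (by simpa using norm_add_le 1 (w t)) (by linarith)
  have hre : ∀ t, 1 - (1 - d) / 2 * (1 + ‖w t‖) ≤ (1 - q t).re := fun t => by
    rw [Complex.sub_re, Complex.one_re]
    linarith [Complex.re_le_norm (q t), hq t]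
  refine ⟨q, hqA, ?_, ?_, fun t => ⟨?_, fun ht => ?_⟩⟩
  · refine ((ContinuousMap.norm_le _ (by linarith)).2 fun t => (hq t).trans ?_).trans_lt
      (by linarith : 1 - d < 1)
    nlinarith [hw1 t]
  · rw [hq_def, hwx]
    push_cast; ring
  · exact le_trans (by nlinarith [hw1 t]) (hre t)
  · exact le_trans (by nlinarith [hwr t ht, norm_nonneg (w t)]) (hre t)

/-- The witness is `a = β (log d - log (1 - q))` for the `q` above, with `β = ε / 2` and `d`
small enough. -/
lemma exists_mem_log_bump (hA : IsClosed (A : Set C(X, ℂ))) {x : X} (hx : x ∈ choquetBdry A)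
    {U : Set X} (hU : IsOpen U) (hxU : x ∈ U) {ε : ℝ} (hε : 0 < ε) :
    ∃ a ∈ A, a x = 0 ∧ (∀ t, (a t).re ≤ 0 ∧ |(a t).im| ≤ ε) ∧
      ∀ t ∉ U, (a t).re ≤ Real.log ε := by
  obtain ⟨γ, hγ, hq⟩ := exists_mem_re_one_sub_ge hx hU hxU
  set β := ε / 2 with hβ_def
  have hβ : 0 < β := by positivity
  set d := min 1 (γ * Real.exp (Real.log ε / β))
  have hd : 0 < d := lt_min one_pos (by positivity)
  have hdε : β * (Real.log d - Real.log γ) ≤ Real.log ε := by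
    have : Real.log d ≤ Real.log γ + Real.log ε / β := by
      rw [← Real.log_exp (Real.log ε / β), ← Real.log_mul hγ.ne' (Real.exp_pos _).ne']
      exact Real.log_le_log hd (min_le_right _ _)
    calc β * (Real.log d - Real.log γ) ≤ β * (Real.log ε / β) := by gcongr; linarith
      _ = Real.log ε := mul_div_cancel₀ _ hβ.ne'
  obtain ⟨q, hqA, hq1, hqx, hqre⟩ := hq d hd (min_le_left _ _)
  obtain ⟨l, hlA, hl⟩ := exists_mem_apply_eq_log_one_sub hA hqA hq1
  obtain ⟨a, haA, ha⟩ : ∃ a ∈ A, ∀ t, a t = (β : ℂ) * (Real.log d - Complex.log (1 - q t)) :=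
    ⟨(β : ℂ) • (algebraMap ℂ C(X, ℂ) (Real.log d) - l),
      A.smul_mem (A.sub_mem (A.algebraMap_mem _) hlA) _, fun t => by simp [hl]⟩
  have hre_a : ∀ t, (a t).re = β * (Real.log d - Real.log ‖1 - q t‖) := fun t => by
    simp [ha, Complex.log_re]
  refine ⟨a, haA, ?_, fun t => ⟨?_, ?_⟩, fun t ht => ?_⟩
  · rw [ha, hqx, sub_sub_cancel, ← Complex.ofReal_log hd.le, sub_self, mul_zero]
  · rw [hre_a]
    refine mul_nonpos_of_nonneg_of_nonpos hβ.le (sub_nonpos.2 (Real.log_le_log hd ?_))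
    exact (hqre t).1.trans (Complex.re_le_norm _)
  · have harg : |Complex.arg (1 - q t)| ≤ Real.pi / 2 :=
      Complex.abs_arg_le_pi_div_two_iff.2 (hd.le.trans (hqre t).1)
    have him : (a t).im = -(β * Complex.arg (1 - q t)) := by simp [ha, Complex.log_im]
    rw [him, abs_neg, abs_mul, abs_of_pos hβ]
    nlinarith [mul_le_mul_of_nonneg_left harg hβ.le, Real.pi_le_four]
  · rw [hre_a]
    refine le_trans ?_ hdε
    gcongr
    exact ((hqre t).2 ht).trans (Complex.re_le_norm _)

lemma exists_mem_bump (hA : IsClosed (A : Set C(X, ℂ))) {x : X} (hx : x ∈ choquetBdry A)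
    {U : Set X} (hU : IsOpen U) (hxU : x ∈ U) {ε : ℝ} (hε : 0 < ε) :
    ∃ v ∈ A, v x = 1 ∧ (∀ t, ‖v t‖ ≤ 1) ∧ (∀ t, ∃ s ∈ Set.Icc (0 : ℝ) 1, ‖v t - s‖ ≤ ε) ∧
      ∀ t ∉ U, ‖v t‖ ≤ ε := by
  obtain ⟨a, haA, hax, ha, haU⟩ := exists_mem_log_bump hA hx hU hxU hε
  obtain ⟨v, hvA, hv⟩ := exists_mem_apply_eq_exp hA haA
  have hexp_le : ∀ t, Real.exp (a t).re ≤ 1 := fun t => Real.exp_le_one_iff.2 (ha t).1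
  refine ⟨v, hvA, by rw [hv, hax, Complex.exp_zero], fun t => ?_,
    fun t => ⟨Real.exp (a t).re, ⟨(Real.exp_pos _).le, hexp_le t⟩, ?_⟩, fun t ht => ?_⟩
  · rw [hv, Complex.norm_exp]
    exact hexp_le t
  · rw [hv]
    calc _ ≤ Real.exp (a t).re * |(a t).im| := norm_exp_sub_exp_re_le _
      _ ≤ 1 * ε := mul_le_mul (hexp_le t) (ha t).2 (abs_nonneg _) zero_le_one
      _ = ε := one_mul ε
  · rw [hv, Complex.norm_exp, ← Real.exp_log hε]
    exact Real.exp_le_exp.2 (haU t ht)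

lemma exists_mem_uaSlice_norm_sub_le (hA : IsClosed (A : Set C(X, ℂ))) {x : X}
    (hx : x ∈ choquetBdry A) {f : C(X, ℂ)} (hf : f ∈ uaSphere A) {lam : ℂ} (hlam : ‖lam‖ = 1)
    {ε : ℝ} (hε : 0 < ε) : ∃ g ∈ uaSlice A x lam, ‖f - g‖ ≤ max 1 ‖f x - lam‖ + ε := by
  have hf1 : ∀ t, ‖f t‖ ≤ 1 := fun t => hf.2 ▸ f.norm_coe_le_norm t
  have hU : IsOpen {t | ‖f t - f x‖ < ε / 2} :=
    isOpen_lt (by fun_prop) continuous_const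
  obtain ⟨v, hvA, hvx, hv1, hvs, hvU⟩ :=
    exists_mem_bump hA hx hU (by simpa using half_pos hε) (half_pos hε)
  refine ⟨lam • v, ⟨⟨A.smul_mem hvA lam, le_antisymm ?_ ?_⟩, by simp [hvx]⟩, ?_⟩
  · exact (ContinuousMap.norm_le _ zero_le_one).2 fun t => by simpa [norm_smul, hlam] using hv1 t
  · simpa [hvx, hlam] using (lam • v).norm_coe_le_norm x
  refine (ContinuousMap.norm_le _ (by positivity)).2 fun t => ?_
  rw [ContinuousMap.sub_apply, ContinuousMap.smul_apply, smul_eq_mul]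
  have hmax := le_max_left 1 ‖f x - lam‖
  by_cases ht : ‖f t - f x‖ < ε / 2
  · obtain ⟨s, hs, hvs⟩ := hvs t
    calc ‖f t - lam * v t‖ ≤ ‖f t - f x‖ + ‖f x - lam * s‖ + ‖lam * (s - v t)‖ := by
          refine le_of_eq_of_le ?_ norm_add₃_le
          congr 1
          ring
      _ ≤ ε / 2 + max ‖f x‖ ‖f x - lam‖ + ε / 2 := by
          gcongr
          · exact norm_sub_mul_ofReal_le_max _ _ hs
          · rw [norm_mul, hlam, one_mul, norm_sub_rev]; exact hvs
      _ ≤ max 1 ‖f x - lam‖ + ε := by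
          linarith [max_le_max_right ‖f x - lam‖ (hf1 x)]
  · calc ‖f t - lam * v t‖ ≤ ‖f t‖ + ‖lam * v t‖ := norm_sub_le _ _
      _ ≤ 1 + ε / 2 := by
          rw [norm_mul, hlam, one_mul]
          exact add_le_add (hf1 t) (hvU t ht)
      _ ≤ max 1 ‖f x - lam‖ + ε := by linarith

end PeakFunctions

lemma ContinuousMap.norm_apply_sub_apply_le {Z : Type*} [TopologicalSpace Z] [CompactSpace Z]
    (f g : C(Z, ℂ)) (t : Z) : ‖f t - g t‖ ≤ ‖f - g‖ :=
  (f - g).norm_coe_le_norm t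

lemma norm_algebraMap_sub_algebraMap {Z : Type*} [TopologicalSpace Z] [CompactSpace Z]
    [Nonempty Z] (c d : ℂ) : ‖algebraMap ℂ C(Z, ℂ) c - algebraMap ℂ C(Z, ℂ) d‖ = ‖c - d‖ := by
  rw [← map_sub, norm_algebraMap']

lemma algebraMap_mem_uaSphere {Z : Type*} [TopologicalSpace Z] [CompactSpace Z] [Nonempty Z]
    (A : Subalgebra ℂ C(Z, ℂ)) {lam : ℂ} (hlam : ‖lam‖ = 1) :
    algebraMap ℂ C(Z, ℂ) lam ∈ uaSphere A :=
  ⟨A.algebraMap_mem lam, by rw [norm_algebraMap', hlam]⟩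

section SliceIsometry

variable {X Y : Type*} [TopologicalSpace X] [CompactSpace X] [TopologicalSpace Y]
  [CompactSpace Y] {A : Subalgebra ℂ C(X, ℂ)} {B : Subalgebra ℂ C(Y, ℂ)}

lemma norm_apply_sub_le_max_of_forall_mem_uaSlice (hA : IsClosed (A : Set C(X, ℂ))) {x : X}
    (hx : x ∈ choquetBdry A) {f : C(X, ℂ)} (hf : f ∈ uaSphere A) {lam : ℂ} (hlam : ‖lam‖ = 1)
    {F : C(Y, ℂ)} {y : Y} {κ : ℂ}
    (hF : ∀ g ∈ uaSlice A x lam, ∃ h : C(Y, ℂ), h y = κ ∧ ‖F - h‖ ≤ ‖f - g‖) :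
    ‖F y - κ‖ ≤ max 1 ‖f x - lam‖ := by
  refine le_of_forall_pos_le_add fun ε hε => ?_
  obtain ⟨g, hg, hfg⟩ := exists_mem_uaSlice_norm_sub_le hA hx hf hlam hε
  obtain ⟨h, hy, hFh⟩ := hF g hg
  calc ‖F y - κ‖ ≤ ‖F - h‖ := hy ▸ F.norm_apply_sub_apply_le h y
    _ ≤ max 1 ‖f x - lam‖ + ε := hFh.trans hfg

variable {T : uaSphere A → uaSphere B}
  (hT : ∀ f g : uaSphere A, ‖(T f : C(Y, ℂ)) - T g‖ = ‖(f : C(X, ℂ)) - g‖)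
  {x : X} {y : Y} {τ : ℂ → ℂ}
  (hτ : ∀ lam : ℂ, ‖lam‖ = 1 → (fun f : uaSphere A => (T f : C(Y, ℂ))) ''
    {f : uaSphere A | (f : C(X, ℂ)) ∈ uaSlice A x lam} = uaSlice B y (τ lam))
include hτ

lemma apply_mem_uaSlice_of_image_eq {lam : ℂ} (hlam : ‖lam‖ = 1) {f : uaSphere A}
    (hf : (f : C(X, ℂ)) ∈ uaSlice A x lam) : (T f : C(Y, ℂ)) ∈ uaSlice B y (τ lam) :=
  hτ lam hlam ▸ ⟨f, hf, rfl⟩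

lemma exists_mem_uaSlice_of_image_eq {lam : ℂ} (hlam : ‖lam‖ = 1) {h : C(Y, ℂ)}
    (hh : h ∈ uaSlice B y (τ lam)) :
    ∃ f : uaSphere A, (f : C(X, ℂ)) ∈ uaSlice A x lam ∧ (T f : C(Y, ℂ)) = h := by
  rw [← hτ lam hlam] at hh
  obtain ⟨f, hf, rfl⟩ := hh
  exact ⟨f, hf, rfl⟩

include hT

lemma norm_map_apply_sub_le_max_of_image_eq (hA : IsClosed (A : Set C(X, ℂ)))
    (hx : x ∈ choquetBdry A) (f : uaSphere A) {lam : ℂ} (hlam : ‖lam‖ = 1) :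
    ‖(T f : C(Y, ℂ)) y - τ lam‖ ≤ max 1 ‖(f : C(X, ℂ)) x - lam‖ :=
  norm_apply_sub_le_max_of_forall_mem_uaSlice hA hx f.2 hlam fun g hg =>
    ⟨T ⟨g, hg.1⟩, (apply_mem_uaSlice_of_image_eq hτ hlam (f := ⟨g, hg.1⟩) hg).2,
      (hT f ⟨g, hg.1⟩).le⟩

lemma norm_apply_sub_le_max_map_of_image_eq (hB : IsClosed (B : Set C(Y, ℂ)))
    (hy : y ∈ choquetBdry B) (f : uaSphere A) {lam : ℂ} (hlam : ‖lam‖ = 1)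
    (hτlam : ‖τ lam‖ = 1) :
    ‖(f : C(X, ℂ)) x - lam‖ ≤ max 1 ‖(T f : C(Y, ℂ)) y - τ lam‖ :=
  norm_apply_sub_le_max_of_forall_mem_uaSlice hB hy (T f).2 hτlam fun h hh => by
    obtain ⟨g, hg, rfl⟩ := exists_mem_uaSlice_of_image_eq hτ hlam hh
    exact ⟨g, hg.2, (hT f g).ge⟩

lemma norm_sub_eq_of_image_eq [Nonempty X] [Nonempty Y]
    (hτ1 : ∀ lam : ℂ, ‖lam‖ = 1 → ‖τ lam‖ = 1) {a b : ℂ} (ha : ‖a‖ = 1) (hb : ‖b‖ = 1) :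
    ‖τ a - τ b‖ = ‖a - b‖ := by
  apply le_antisymm
  · set ca : uaSphere A := ⟨_, algebraMap_mem_uaSphere A ha⟩
    set cb : uaSphere A := ⟨_, algebraMap_mem_uaSphere A hb⟩
    rw [← (apply_mem_uaSlice_of_image_eq hτ ha (f := ca) ⟨ca.2, rfl⟩).2,
      ← (apply_mem_uaSlice_of_image_eq hτ hb (f := cb) ⟨cb.2, rfl⟩).2,
      ← norm_algebraMap_sub_algebraMap (Z := X) a b]
    exact (ContinuousMap.norm_apply_sub_apply_le _ _ y).trans_eq (hT ca cb)
  · obtain ⟨g, hg, hTg⟩ := exists_mem_uaSlice_of_image_eq hτ ha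
      ⟨algebraMap_mem_uaSphere B (hτ1 a ha), rfl⟩
    obtain ⟨g', hg', hTg'⟩ := exists_mem_uaSlice_of_image_eq hτ hb
      ⟨algebraMap_mem_uaSphere B (hτ1 b hb), rfl⟩
    calc ‖a - b‖ = ‖(g : C(X, ℂ)) x - (g' : C(X, ℂ)) x‖ := by rw [hg.2, hg'.2]
      _ ≤ ‖(T g : C(Y, ℂ)) - T g'‖ :=
        (ContinuousMap.norm_apply_sub_apply_le _ _ x).trans_eq (hT g g').symm
      _ = ‖τ a - τ b‖ := by rw [hTg, hTg', norm_algebraMap_sub_algebraMap]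

end SliceIsometry

theorem form_of_T_on_choquet_boundary_general
    {X Y : Type*} [TopologicalSpace X] [CompactSpace X] [Nonempty X]
    [TopologicalSpace Y] [CompactSpace Y] [Nonempty Y]
    (A : Subalgebra ℂ C(X, ℂ)) (hA : IsClosed (A : Set C(X, ℂ)))
    (B : Subalgebra ℂ C(Y, ℂ)) (hB : IsClosed (B : Set C(Y, ℂ)))
    (T : ↥(uaSphere A) → ↥(uaSphere B))
    (hTiso : ∀ f g : ↥(uaSphere A),
      ‖(T f : C(Y, ℂ)) - (T g : C(Y, ℂ))‖ = ‖(f : C(X, ℂ)) - (g : C(X, ℂ))‖)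
    (φ : X → Y) (hφ : Set.BijOn φ (choquetBdry A) (choquetBdry B))
    (τ : X → ℂ → ℂ)
    (hτ : ∀ x ∈ choquetBdry A, ∀ lam : ℂ, ‖lam‖ = 1 →
      ‖τ x lam‖ = 1 ∧
      (fun f : ↥(uaSphere A) => (T f : C(Y, ℂ))) ''
          {f : ↥(uaSphere A) | (f : C(X, ℂ)) ∈ uaSlice A x lam} =
        uaSlice B (φ x) (τ x lam)) :
    ∀ (f : ↥(uaSphere A)), ∀ x ∈ choquetBdry A,
      (τ x Complex.I / τ x 1 = Complex.I →
        (T f : C(Y, ℂ)) (φ x) = τ x 1 * (f : C(X, ℂ)) x) ∧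
      (τ x Complex.I / τ x 1 = -Complex.I →
        (T f : C(Y, ℂ)) (φ x) = τ x 1 * conj ((f : C(X, ℂ)) x)) := by
  intro f x hx
  have hτ1 : ∀ lam : ℂ, ‖lam‖ = 1 → ‖τ x lam‖ = 1 := fun lam hlam => (hτ x hx lam hlam).1
  have hslice := fun lam hlam => (hτ x hx lam hlam).2
  have hdist : ∀ a b : ℂ, ‖a‖ = 1 → ‖b‖ = 1 → ‖τ x a - τ x b‖ = ‖a - b‖ :=
    fun a b ha hb => norm_sub_eq_of_image_eq hTiso hslice hτ1 ha hb
  have H₁ : ∀ lam : ℂ, ‖lam‖ = 1 →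
      ‖(T f : C(Y, ℂ)) (φ x) - τ x lam‖ ≤ max 1 ‖(f : C(X, ℂ)) x - lam‖ :=
    fun lam hlam => norm_map_apply_sub_le_max_of_image_eq hTiso hslice hA hx f hlam
  have H₂ : ∀ lam : ℂ, ‖lam‖ = 1 →
      ‖(f : C(X, ℂ)) x - lam‖ ≤ max 1 ‖(T f : C(Y, ℂ)) (φ x) - τ x lam‖ :=
    fun lam hlam => norm_apply_sub_le_max_map_of_image_eq hTiso hslice hB (hφ.mapsTo hx) f hlam
      (hτ1 lam hlam)
  have hτ0 : τ x 1 ≠ 0 := ne_zero_of_norm_ne_zero ((hτ1 1 norm_one) ▸ one_ne_zero)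
  refine ⟨fun hplus => ?_, fun hminus => ?_⟩
  · have hrot : ∀ {lam : ℂ}, ‖lam‖ = 1 → τ x lam = τ x 1 * lam :=
      eq_mul_of_apply_I_eq_I_mul hτ1 hdist ((div_eq_iff hτ0).1 hplus)
    exact eq_mul_of_forall_norm_sub_mul_le_max (hτ1 1 norm_one)
      (fun lam hlam => hrot hlam ▸ H₁ lam hlam) (fun lam hlam => hrot hlam ▸ H₂ lam hlam)
  · have hrot : ∀ {lam : ℂ}, ‖lam‖ = 1 → τ x lam = τ x 1 * conj lam :=
      eq_mul_conj_of_apply_I_eq_neg_I_mul hτ1 hdist ((div_eq_iff hτ0).1 hminus)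
    exact eq_mul_conj_of_forall_norm_sub_mul_conj_le_max (hτ1 1 norm_one)
      (fun lam hlam => hrot hlam ▸ H₁ lam hlam) (fun lam hlam => hrot hlam ▸ H₂ lam hlam)

/-- With `φ`, `τ` as in the correspondence `T(F_{x,λ}) = F_{φ(x),τ(x,λ)}`, for every
`f ∈ S(A)` one has `T(f)(φ(x)) = τ(x,1)·f(x)` on `Ch(A)₊` and
`T(f)(φ(x)) = τ(x,1)·conj(f(x))` on `Ch(A)₋`. -/
theorem form_of_T_on_choquet_boundary
    {X Y : Type*} [TopologicalSpace X] [CompactSpace X] [T2Space X] [Nonempty X]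
    [TopologicalSpace Y] [CompactSpace Y] [T2Space Y] [Nonempty Y]
    (A : Subalgebra ℂ C(X, ℂ)) (hA : IsClosed (A : Set C(X, ℂ)))
    (hAsep : ∀ x₁ x₂ : X, x₁ ≠ x₂ → ∃ f ∈ A, f x₁ ≠ f x₂)
    (B : Subalgebra ℂ C(Y, ℂ)) (hB : IsClosed (B : Set C(Y, ℂ)))
    (hBsep : ∀ y₁ y₂ : Y, y₁ ≠ y₂ → ∃ g ∈ B, g y₁ ≠ g y₂)
    (T : ↥(uaSphere A) → ↥(uaSphere B))
    (hTsur : Function.Surjective T)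
    (hTiso : ∀ f g : ↥(uaSphere A),
      ‖(T f : C(Y, ℂ)) - (T g : C(Y, ℂ))‖ = ‖(f : C(X, ℂ)) - (g : C(X, ℂ))‖)
    (φ : X → Y) (hφ : Set.BijOn φ (choquetBdry A) (choquetBdry B))
    (τ : X → ℂ → ℂ)
    (hτ : ∀ x ∈ choquetBdry A, ∀ lam : ℂ, ‖lam‖ = 1 →
      ‖τ x lam‖ = 1 ∧
      (fun f : ↥(uaSphere A) => (T f : C(Y, ℂ))) ''
          {f : ↥(uaSphere A) | (f : C(X, ℂ)) ∈ uaSlice A x lam} =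
        uaSlice B (φ x) (τ x lam)) :
    ∀ (f : ↥(uaSphere A)), ∀ x ∈ choquetBdry A,
      (τ x Complex.I / τ x 1 = Complex.I →
        (T f : C(Y, ℂ)) (φ x) = τ x 1 * (f : C(X, ℂ)) x) ∧
      (τ x Complex.I / τ x 1 = -Complex.I →
        (T f : C(Y, ℂ)) (φ x) = τ x 1 * conj ((f : C(X, ℂ)) x)) :=
  form_of_T_on_choquet_boundary_general A hA B hB T hTiso φ hφ τ hτ
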